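/- arXiv:2008.13209 — 6 statements merged into one kernel-verified Lean document; each statement's English description precedes it below -/
import Mathlib

section
/- (Periodicity Lemma of Fine and Wilf) If p and q are periods of a word w and |w| ≥ p + q − gcd(p, q), then gcd(p, q) is also a period of w. -/
/-- `p` is a period of `w` if `0 < p ≤ |w|` and `w[i] = w[i+p]` whenever both
indices are valid (0-indexed). -/
def IsPeriod {A : Type*} (w : List A) (p : ℕ) : Prop :=
  0 < p ∧ p ≤ w.length ∧ ∀ i : ℕ, i + p < w.length → w[i]? = w[i + p]?

/-- The shortest period of a word. -/
noncomputable def minPer {A : Type*} (w : List A) : ℕ :=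
  sInf {p | IsPeriod w p}

/-!
Induction on `p + q`, in the manner of Euclid's algorithm. For periods `p < q` of `w`, the
prefix `u` of `w` of length `|w| - p` has the periods `p` and `q - p`, whose gcd is again
`gcd p q`, and the length bound passes to `u`; so by induction `gcd p q` is a period of `u`.
Since `|u| ≥ p`, every position of `w` agrees with a position of `u` modulo `p`, hence modulo
`gcd p q`, so `gcd p q` is a period of all of `w`.
-/

section

variable {A : Type*} {w : List A} {p q g n : ℕ}

theorem IsPeriod.getElem?_add_mul (h : IsPeriod w p) {i : ℕ} :
    ∀ k, i + p * k < w.length → w[i]? = w[i + p * k]?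
  | 0, _ => rfl
  | k + 1, hk => by
    rw [h.getElem?_add_mul k (by nlinarith), h.2.2 _ (by rw [mul_add] at hk; omega)]
    ring_nf

theorem IsPeriod.getElem?_mod (h : IsPeriod w p) {i : ℕ} (hi : i < w.length) :
    w[i % p]? = w[i]? := by
  conv_rhs => rw [← Nat.mod_add_div i p]
  exact h.getElem?_add_mul _ (by rwa [Nat.mod_add_div])

theorem IsPeriod.getElem?_eq_of_modEq (h : IsPeriod w p) {i j : ℕ} (hi : i < w.length)
    (hj : j < w.length) (hij : i ≡ j [MOD p]) : w[i]? = w[j]? := by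
  rw [← h.getElem?_mod hi, ← h.getElem?_mod hj, hij]

theorem isPeriod_iff_modEq :
    IsPeriod w p ↔ 0 < p ∧ p ≤ w.length ∧
      ∀ i j, i < w.length → j < w.length → i ≡ j [MOD p] → w[i]? = w[j]? := by
  refine ⟨fun h => ⟨h.1, h.2.1, fun i j hi hj => h.getElem?_eq_of_modEq hi hj⟩,
    fun ⟨hp, hpw, h⟩ => ⟨hp, hpw, fun i hi => h _ _ (by omega) hi ?_⟩⟩
  simp [Nat.ModEq]

theorem IsPeriod.take (h : IsPeriod w p) (hpn : p ≤ n) : IsPeriod (w.take n) p := by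
  refine ⟨h.1, by simp [hpn, h.2.1], fun i hi => ?_⟩
  simp only [List.length_take, lt_min_iff] at hi
  rw [List.getElem?_take_of_lt (by omega), List.getElem?_take_of_lt hi.1, h.2.2 i hi.2]

theorem IsPeriod.take_length_sub_sub (hp : IsPeriod w p) (hq : IsPeriod w q) (hpq : p < q) :
    IsPeriod (w.take (w.length - p)) (q - p) := by
  have hqw := hq.2.1
  refine ⟨by omega, by simp; omega, fun i hi => ?_⟩
  simp only [List.length_take, lt_min_iff] at hi
  rw [List.getElem?_take_of_lt (by omega), List.getElem?_take_of_lt hi.1]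
  calc w[i]? = w[i + q]? := hq.2.2 i (by omega)
    _ = w[i + (q - p) + p]? := by rw [Nat.add_assoc, Nat.sub_add_cancel hpq.le]
    _ = w[i + (q - p)]? := (hp.2.2 _ (by omega)).symm

theorem IsPeriod.of_take (hp : IsPeriod w p) (hg : IsPeriod (w.take n) g) (hgp : g ∣ p)
    (hpn : p ≤ n) : IsPeriod w g := by
  have hmod_lt : ∀ k, k % p < (w.take n).length := fun k => by
    simpa using ⟨(Nat.mod_lt k hp.1).trans_le hpn, (Nat.mod_lt k hp.1).trans_le hp.2.1⟩
  have hmod : ∀ k, k < w.length → (w.take n)[k % p]? = w[k]? := fun k hk => by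
    rw [List.getElem?_take_of_lt ((Nat.mod_lt k hp.1).trans_le hpn), hp.getElem?_mod hk]
  refine isPeriod_iff_modEq.2 ⟨hg.1, hg.2.1.trans (by simp), fun i j hi hj hij => ?_⟩
  rw [← hmod i hi, ← hmod j hj]
  refine hg.getElem?_eq_of_modEq (hmod_lt i) (hmod_lt j) ?_
  exact ((Nat.mod_modEq i p).of_dvd hgp).trans (hij.trans ((Nat.mod_modEq j p).of_dvd hgp).symm)

end

/-- Periodicity Lemma (Fine and Wilf): if `p` and `q` are periods of `w` and
`|w| ≥ p + q − gcd(p,q)`, then `gcd(p,q)` is also a period of `w`. -/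
theorem fine_wilf {A : Type*} (w : List A) (p q : ℕ)
    (hp : IsPeriod w p) (hq : IsPeriod w q)
    (hlen : p + q - Nat.gcd p q ≤ w.length) :
    IsPeriod w (Nat.gcd p q) := by
  induction hs : p + q using Nat.strong_induction_on generalizing w p q with
  | _ s ih =>
  wlog hpq : p ≤ q generalizing p q
  · rw [Nat.gcd_comm] at hlen ⊢
    exact this q p hq hp (by omega) (by omega) (le_of_not_ge hpq)
  obtain rfl | hpq := hpq.eq_or_lt
  · simpa using hp
  have hgcd : Nat.gcd p (q - p) = Nat.gcd p q := Nat.gcd_sub_self_right hpq.le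
  have hgq : Nat.gcd p q ≤ q - p :=
    Nat.le_of_dvd (Nat.sub_pos_of_lt hpq) (hgcd ▸ Nat.gcd_dvd_right p (q - p))
  have hu : IsPeriod (w.take (w.length - p)) (Nat.gcd p q) := by
    rw [← hgcd]
    exact ih q (by have := hp.1; omega) _ p (q - p) (hp.take (by omega))
      (hp.take_length_sub_sub hq hpq) (by simp only [List.length_take, hgcd]; omega) (by omega)
  exact hp.of_take hu (Nat.gcd_dvd_left p q) (by omega)
end

section
/- Let u be a nonempty word with a period p, and let v be a factor (contiguous substring) of u with 2p ≤ |v|. Then per(u) = per(v). -/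
/-!
Restricting a period of `u` to the factor `v` gives `per v ≤ per u`. Conversely, a period `g` of
`v` with `p + g ≤ |v|` lifts to `u`: every position `i` of `u` is congruent modulo `p` to a
position `j` in the first `p` letters of `v`, and then `u[i] = u[j] = u[j+g] = u[i+g]`. As
`per v ≤ p ≤ |v| - p`, this applies to `g = per v`.
-/
theorem List.getElem?_append_append_length_add {A : Type*} (x v y : List A) {i : ℕ}
    (hi : i < v.length) : (x ++ v ++ y)[x.length + i]? = v[i]? := by
  rw [getElem?_append_left (by simp; omega), getElem?_append_right (by omega)]
  simp

theorem Nat.exists_mem_Ico_modEq {p : ℕ} (hp : 0 < p) (a i : ℕ) :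
    ∃ j ∈ Set.Ico a (a + p), j ≡ i [MOD p] := by
  have hpa : a ≤ p * a := Nat.le_mul_of_pos_left a hp
  have hmod := Nat.mod_lt (i + p * a - a) hp
  refine ⟨a + (i + p * a - a) % p, ⟨by omega, by omega⟩, ?_⟩
  calc a + (i + p * a - a) % p ≡ a + (i + p * a - a) [MOD p] := (Nat.mod_modEq _ _).add_left a
    _ = i + p * a := by omega
    _ ≡ i [MOD p] := by simp [Nat.ModEq]

namespace IsPeriod

variable {A : Type*} {w : List A} {p : ℕ}

theorem minPer_mem (hp : IsPeriod w p) : IsPeriod w (minPer w) :=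
  Nat.sInf_mem (s := {p | IsPeriod w p}) ⟨p, hp⟩

theorem minPer_le (hp : IsPeriod w p) : minPer w ≤ p := Nat.sInf_le hp

theorem of_infix {v : List A} (hw : IsPeriod w p) (hvw : v <:+: w) (hpv : p ≤ v.length) :
    IsPeriod v p := by
  obtain ⟨x, y, rfl⟩ := hvw
  refine ⟨hw.1, hpv, fun i hi => ?_⟩
  rw [← List.getElem?_append_append_length_add x v y (by omega),
    ← List.getElem?_append_append_length_add x v y hi, ← add_assoc]
  exact hw.2.2 _ (by simp; omega)

theorem getElem?_mod_s6 (hp : IsPeriod w p) {i : ℕ} (hi : i < w.length) : w[i % p]? = w[i]? := by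
  induction i using Nat.strong_induction_on with
  | _ i ih =>
    by_cases h : i < p
    · rw [Nat.mod_eq_of_lt h]
    · rw [Nat.mod_eq_sub_mod (not_lt.1 h), ih (i - p) (by have := hp.1; omega) (by omega),
        hp.2.2 _ (by omega), Nat.sub_add_cancel (not_lt.1 h)]

theorem getElem?_eq_of_modEq_s6 (hp : IsPeriod w p) {i j : ℕ} (hij : i ≡ j [MOD p])
    (hi : i < w.length) (hj : j < w.length) : w[i]? = w[j]? := by
  rw [← hp.getElem?_mod_s6 hi, ← hp.getElem?_mod_s6 hj, hij]

theorem of_factor {x v y : List A} {g : ℕ} (hp : IsPeriod (x ++ v ++ y) p)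
    (hg : IsPeriod v g) (hv : p + g ≤ v.length) : IsPeriod (x ++ v ++ y) g := by
  set a := x.length
  have hlen : (x ++ v ++ y).length = a + v.length + y.length := by simp [a, add_assoc]
  refine ⟨hg.1, by omega, fun i hi => ?_⟩
  obtain ⟨j, ⟨haj, hja⟩, hji⟩ := Nat.exists_mem_Ico_modEq hp.1 a i
  rw [← hp.getElem?_eq_of_modEq_s6 hji (by omega) (by omega),
    ← hp.getElem?_eq_of_modEq_s6 (hji.add_right g) (by omega) hi,
    ← Nat.add_sub_cancel' haj, add_assoc,
    List.getElem?_append_append_length_add _ _ _ (by omega),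
    List.getElem?_append_append_length_add _ _ _ (by omega)]
  exact hg.2.2 _ (by omega)

end IsPeriod

theorem minPer_factor_general {A : Type*} (u v x y : List A) (p : ℕ)
    (hp : IsPeriod u p)
    (hfac : u = x ++ v ++ y) (hlen : 2 * p ≤ v.length) :
    minPer u = minPer v := by
  subst hfac
  have hinfix : v <:+: x ++ v ++ y := ⟨x, y, rfl⟩
  have hpv : IsPeriod v p := hp.of_infix hinfix (by omega)
  have hvu : minPer v ≤ minPer (x ++ v ++ y) :=
    (hp.minPer_mem.of_infix hinfix (by have := hp.minPer_le; omega)).minPer_le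
  have huv : minPer (x ++ v ++ y) ≤ minPer v :=
    (hp.of_factor hpv.minPer_mem (by have := hpv.minPer_le; omega)).minPer_le
  omega

/-- If a nonempty word `u` has a period `p` and `v` is a factor of `u` with
`2p ≤ |v|`, then `u` and `v` have the same shortest period. -/
theorem minPer_factor {A : Type*} (u v x y : List A) (p : ℕ)
    (hu : u ≠ []) (hp : IsPeriod u p)
    (hfac : u = x ++ v ++ y) (hlen : 2 * p ≤ v.length) :
    minPer u = minPer v :=
  minPer_factor_general u v x y p hp hfac hlen
end

section
/- Suppose u and v are palindromes and v is a suffix of u. Then v is also a prefix of u, and if moreover |v| < |u|, then |u| − |v| is a period of u. -/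
/-! A suffix of a palindrome is the reverse of a prefix, so a palindromic suffix is also a
prefix, i.e. a border; and a proper border `v` of `u` gives the period `|u| - |v|`, since
`u[i] = v[i] = u[i + (|u| - |v|)]` for `i < |v|`. -/

theorem List.IsSuffix.isPrefix_of_reverse_eq {A : Type*} {u v : List A}
    (hsuf : v <:+ u) (hu : u.reverse = u) (hv : v.reverse = v) : v <+: u := by
  rw [← hu, ← hv]
  exact List.reverse_prefix.mpr hsuf

theorem isPeriod_length_sub_of_border {A : Type*} {u v : List A}
    (hpre : v <+: u) (hsuf : v <:+ u) (hlt : v.length < u.length) :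
    IsPeriod u (u.length - v.length) := by
  obtain ⟨y, rfl⟩ := hpre
  obtain ⟨x, hx⟩ := hsuf
  have hxlen : x.length = y.length := by
    have := congrArg List.length hx
    simp only [List.length_append] at this
    omega
  refine ⟨by omega, by omega, fun i hi => ?_⟩
  have hiv : i < v.length := by rw [List.length_append] at hi; omega
  calc (v ++ y)[i]? = v[i]? := List.getElem?_append_left hiv
    _ = (x ++ v)[x.length + i]? := by
      rw [List.getElem?_append_right (by omega)]; simp
    _ = (v ++ y)[i + ((v ++ y).length - v.length)]? := by
      rw [hx, List.length_append]; congr 1; omega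

/-- If palindromes `u`, `v` satisfy that `v` is a suffix of `u`, then `v` is also a
prefix of `u`, and if `|v| < |u|` then `|u| − |v|` is a period of `u`. -/
theorem pal_suffix_period {A : Type*} (u v : List A)
    (hu : u.reverse = u) (hv : v.reverse = v) (hsuf : v <:+ u) :
    v <+: u ∧ (v.length < u.length → IsPeriod u (u.length - v.length)) := by
  have hpre : v <+: u := hsuf.isPrefix_of_reverse_eq hu hv
  exact ⟨hpre, isPeriod_length_sub_of_border hpre hsuf⟩
end

section
/- Let n ≥ 1 be an integer and set α = ⌈2√n⌉. Let C_1, C_2, …, C_m be palindromic words such that C_{j+1} is a proper suffix of C_j for every 1 ≤ j < m, with |C_1| ≤ n and m > α. Then per(C_α) ≤ √n / 2, and moreover for every index i with α ≤ i ≤ m such that |C_i| ≥ √n, one has per(C_i) = per(C_α). -/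
open List

section Periods

variable {A : Type*} {u v w : List A} {p d : ℕ}

theorem isPeriod_iff_hasPeriod : IsPeriod w p ↔ 0 < p ∧ p ≤ w.length ∧ w.HasPeriod p := by
  simp only [IsPeriod, hasPeriod_iff_getElem?]
  refine and_congr_right fun _ => and_congr_right fun _ => forall_congr' fun i => ?_
  exact ⟨fun h hi => h (by omega), fun h hi => h (by omega)⟩

theorem minPer_nil : minPer ([] : List A) = 0 := by
  rw [minPer, Nat.sInf_eq_zero]
  right
  ext p
  simp only [IsPeriod, length_nil, Set.mem_ofPred_eq, Set.mem_empty_iff_false, iff_false]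
  omega

theorem isPeriod_length (h : w ≠ []) : IsPeriod w w.length :=
  ⟨length_pos_iff.mpr h, le_rfl, fun _ _ => by omega⟩

theorem minPer_isPeriod (h : w ≠ []) : IsPeriod w (minPer w) :=
  Nat.sInf_mem (s := {p | IsPeriod w p}) ⟨_, isPeriod_length h⟩

theorem minPer_le_length (w : List A) : minPer w ≤ w.length := by
  rcases eq_or_ne w [] with rfl | h
  · simp [minPer_nil]
  · exact Nat.sInf_le (isPeriod_length h)

theorem minPer_le_of_hasPeriod (hp : w.HasPeriod p) (hp0 : 0 < p) : minPer w ≤ p := by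
  by_cases hpw : p ≤ w.length
  · exact Nat.sInf_le (isPeriod_iff_hasPeriod.mpr ⟨hp0, hpw, hp⟩)
  · exact (minPer_le_length w).trans (by omega)

theorem hasPeriod_length_sub_of_border (hs : v <:+ w) (hp : v <+: w) :
    w.HasPeriod (w.length - v.length) := by
  obtain ⟨s, rfl⟩ := hs
  simpa [HasPeriod] using (prefix_append_right_inj s).mpr hp

theorem List.HasPeriod.of_prefix_of_dvd (hw : w.HasPeriod p) (hp0 : 0 < p) (hu : u <+: w)
    (hpu : p ≤ u.length) (hd : u.HasPeriod d) (hdp : d ∣ p) : w.HasPeriod d := by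
  obtain ⟨s, rfl⟩ := hu
  have hd0 : 0 < d := Nat.pos_of_dvd_of_pos hdp hp0
  -- every index of `u ++ s` reduces modulo `p` into `u`, where it reduces further modulo `d`
  have hmod : ∀ i < (u ++ s).length, (u ++ s)[i]? = u[i % d]? := by
    intro i hi
    have hip : i % p < u.length := (Nat.mod_lt i hp0).trans_le hpu
    rw [← hw.getElem?_mod p i _ hi, getElem?_append_left hip,
      ← hd.getElem?_mod d _ _ hip, Nat.mod_mod_of_dvd _ hdp]
  rw [hasPeriod_iff_getElem?]
  intro i hi
  rw [hmod i (by omega), hmod (i + d) (by omega), Nat.add_mod_right]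

theorem minPer_eq_of_prefix (hu : u <+: w) (hlen : 2 * minPer w ≤ u.length) :
    minPer u = minPer w := by
  rcases eq_or_ne u [] with rfl | hu0
  · simp only [minPer_nil, length_nil] at hlen ⊢
    omega
  have hw0 : w ≠ [] := by
    rintro rfl
    exact hu0 (prefix_nil.mp hu)
  obtain ⟨hP0, -, hPw⟩ := isPeriod_iff_hasPeriod.mp (minPer_isPeriod hw0)
  obtain ⟨hQ0, -, hQu⟩ := isPeriod_iff_hasPeriod.mp (minPer_isPeriod hu0)
  set P := minPer w
  set Q := minPer u
  have hPu : u.HasPeriod P := hPw.infix hu.isInfix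
  have hQP : Q ≤ P := minPer_le_of_hasPeriod hPu hP0
  have hgu : u.HasPeriod (P.gcd Q) := hPu.gcd hQu (by omega)
  have hgw : w.HasPeriod (P.gcd Q) :=
    hPw.of_prefix_of_dvd hP0 hu (by omega) hgu (Nat.gcd_dvd_left P Q)
  have hPg : P ≤ P.gcd Q := minPer_le_of_hasPeriod hgw (Nat.gcd_pos_of_pos_left Q hP0)
  have hgQ : P.gcd Q ≤ Q := Nat.gcd_le_right P hQ0
  omega

end Periods

section Palindromes

variable {A : Type*} {u v w : List A}

theorem List.IsSuffix.isPrefix_of_reverse_eq_s8 (h : v <:+ w) (hv : v.reverse = v)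
    (hw : w.reverse = w) : v <+: w := by
  rw [← reverse_suffix, hv, hw]
  exact h

theorem length_add_minPer_le_of_suffix_of_reverse_eq (hvw : v <:+ w)
    (hlt : v.length < w.length) (hv : v.reverse = v) (hw : w.reverse = w) (huv : u <:+ v) :
    v.length + minPer u ≤ w.length := by
  have hper := hasPeriod_length_sub_of_border hvw (hvw.isPrefix_of_reverse_eq_s8 hv hw)
  have := minPer_le_of_hasPeriod (hper.infix (huv.trans hvw).isInfix) (by omega)
  omega

variable {C : ℕ → List A} {m : ℕ}

theorem suffix_of_le_of_suffix_chain (hsuf : ∀ j, 1 ≤ j → j < m → C (j + 1) <:+ C j)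
    {a b : ℕ} (ha : 1 ≤ a) (hab : a ≤ b) (hbm : b ≤ m) : C b <:+ C a := by
  induction b, hab using Nat.le_induction with
  | base => exact suffix_refl _
  | succ b hab ih => exact (hsuf b (by omega) (by omega)).trans (ih (by omega))

theorem succ_mul_minPer_le_length_of_palindrome_chain
    (hpal : ∀ j, 1 ≤ j → j ≤ m → (C j).reverse = C j)
    (hsuf : ∀ j, 1 ≤ j → j < m → C (j + 1) <:+ C j ∧ (C (j + 1)).length < (C j).length)
    (d : ℕ) :
    ∀ i, 1 ≤ i → i + d ≤ m → (d + 1) * minPer (C (i + d)) ≤ (C i).length := by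
  induction d with
  | zero => exact fun i _ _ => by simpa using minPer_le_length (C i)
  | succ d ih =>
    intro i hi him
    obtain ⟨hsuf_i, hlt_i⟩ := hsuf i hi (by omega)
    have htail : C (i + (d + 1)) <:+ C (i + 1) := by
      rw [← add_assoc]
      exact suffix_of_le_of_suffix_chain (fun j h1 h2 => (hsuf j h1 h2).1) (by omega)
        (by omega) (by omega)
    have hdrop := length_add_minPer_le_of_suffix_of_reverse_eq hsuf_i hlt_i
      (hpal (i + 1) (by omega) (by omega)) (hpal i hi (by omega)) htail
    have hrest := ih (i + 1) (by omega) (by omega)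
    rw [add_assoc, add_comm 1 d] at hrest
    rw [add_mul, one_mul]
    omega

end Palindromes

/-- For a chain `C_1, …, C_m` of palindromes, each a proper suffix of the previous,
with `|C_1| ≤ n` and `m > α` where `α = ⌈2√n⌉`: the shortest period of `C_α` is at
most `√n / 2`, and every `C_i` with `α ≤ i ≤ m` and `|C_i| ≥ √n` has the same
shortest period as `C_α`. -/
theorem middle_palindromes_periodic {A : Type*} (n m : ℕ) (hn : 1 ≤ n)
    (α : ℕ) (hα : α = ⌈2 * Real.sqrt n⌉₊) (C : ℕ → List A)
    (hpal : ∀ j, 1 ≤ j → j ≤ m → (C j).reverse = C j)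
    (hsuf : ∀ j, 1 ≤ j → j < m →
      C (j + 1) <:+ C j ∧ (C (j + 1)).length < (C j).length)
    (hC1 : (C 1).length ≤ n) (hm : α < m) :
    (minPer (C α) : ℝ) ≤ Real.sqrt n / 2 ∧
    ∀ i, α ≤ i → i ≤ m → Real.sqrt n ≤ ((C i).length : ℝ) →
      minPer (C i) = minPer (C α) := by
  have hsqrt : 0 < Real.sqrt n := Real.sqrt_pos.mpr (by exact_mod_cast hn)
  have hαsqrt : 2 * Real.sqrt n ≤ α := hα ▸ Nat.le_ceil _
  have hα1 : 1 ≤ α := by exact_mod_cast (by linarith : (0 : ℝ) < α)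
  have hαP : α * minPer (C α) ≤ n := by
    have h :=
      succ_mul_minPer_le_length_of_palindrome_chain hpal hsuf (α - 1) 1 le_rfl (by omega)
    rw [Nat.sub_add_cancel hα1, Nat.add_sub_cancel' hα1] at h
    exact h.trans hC1
  have hperα : (minPer (C α) : ℝ) ≤ Real.sqrt n / 2 := by
    have h : (α : ℝ) * minPer (C α) ≤ Real.sqrt n * Real.sqrt n := by
      rw [Real.mul_self_sqrt n.cast_nonneg]
      exact_mod_cast hαP
    nlinarith
  refine ⟨hperα, fun i hαi him hi => ?_⟩
  have hCi : C i <:+ C α :=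
    suffix_of_le_of_suffix_chain (fun j h1 h2 => (hsuf j h1 h2).1) hα1 hαi him
  refine minPer_eq_of_prefix
    (hCi.isPrefix_of_reverse_eq_s8 (hpal i (by omega) him) (hpal α hα1 (by omega))) ?_
  exact_mod_cast (by linarith : (2 * minPer (C α) : ℝ) ≤ (C i).length)
end

section
/- Let n be a nonnegative real number and let a_1, …, a_k be nonnegative real numbers with a_1 + ⋯ + a_k ≤ n. Then Σ_{i=1}^{k} min(a_i², n) ≤ n^{3/2}. -/
open Finset Real

lemma min_sq_le_mul_sqrt {a n : ℝ} (ha : 0 ≤ a) (hn : 0 ≤ n) : min (a ^ 2) n ≤ a * √n := by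
  rcases le_total a √n with h | h
  · calc min (a ^ 2) n ≤ a * a := by rw [← sq]; exact min_le_left _ _
      _ ≤ a * √n := by gcongr
  · calc min (a ^ 2) n ≤ √n * √n := by rw [mul_self_sqrt hn]; exact min_le_right _ _
      _ ≤ a * √n := by gcongr

lemma Real.rpow_three_halves {n : ℝ} (hn : 0 ≤ n) : n ^ ((3 : ℝ) / 2) = n * √n := by
  rw [show (3 : ℝ) / 2 = 1 + 1 / 2 by norm_num, rpow_add' hn (by norm_num), rpow_one,
    sqrt_eq_rpow]

theorem sum_min_sq_le_general {k : ℕ} (n : ℝ) (a : Fin k → ℝ)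
    (ha : ∀ i, 0 ≤ a i) (hsum : ∑ i, a i ≤ n) :
    ∑ i, min ((a i) ^ 2) n ≤ n ^ ((3 : ℝ) / 2) := by
  have hn : 0 ≤ n := (sum_nonneg fun i _ => ha i).trans hsum
  calc ∑ i, min ((a i) ^ 2) n ≤ ∑ i, a i * √n :=
        sum_le_sum fun i _ => min_sq_le_mul_sqrt (ha i) hn
    _ = (∑ i, a i) * √n := (sum_mul ..).symm
    _ ≤ n * √n := by gcongr
    _ = n ^ ((3 : ℝ) / 2) := (rpow_three_halves hn).symm

/-- If nonnegative reals `a_1, …, a_k` sum to at most `n`, then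
`Σ min(a_i², n) ≤ n^{3/2}`. -/
theorem sum_min_sq_le {k : ℕ} (n : ℝ) (hn : 0 ≤ n) (a : Fin k → ℝ)
    (ha : ∀ i, 0 ≤ a i) (hsum : ∑ i, a i ≤ n) :
    ∑ i, min ((a i) ^ 2) n ≤ n ^ ((3 : ℝ) / 2) :=
  sum_min_sq_le_general n a ha hsum
end

section
/- Let Σ be an alphabet and work over the extended alphabet Σ ∪ {$} where $ ∉ Σ (formally, over Option Σ with $ represented by the extra symbol). Define h(c) = $ c c $ for each letter c ∈ Σ, i.e., h maps a letter c to the four-letter word [$, c, c, $], and extend h to words by concatenating the images of the letters. Then for every word w over Σ, w is a palindrome if and only if h(w) is a palindrome. -/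
/-- The morphism mapping each letter `c` to the four-letter word `$ c c $`,
where `$` is a fresh symbol (`none`) not in the alphabet (letters `c` are
represented by `some c`). -/
def dollarMorphism {A : Type*} : List A → List (Option A)
  | [] => []
  | c :: w => none :: some c :: some c :: none :: dollarMorphism w

/-! Every block `$ c c $` is itself a palindrome, so the morphism commutes with reversal;
being injective, it then maps exactly the palindromes to palindromes. -/

section

variable {A : Type*}

@[simp]
theorem dollarMorphism_nil : dollarMorphism ([] : List A) = [] := rfl

@[simp]
theorem dollarMorphism_cons (c : A) (w : List A) :
    dollarMorphism (c :: w) = none :: some c :: some c :: none :: dollarMorphism w := rfl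

@[simp]
theorem dollarMorphism_append (u v : List A) :
    dollarMorphism (u ++ v) = dollarMorphism u ++ dollarMorphism v := by
  induction u with
  | nil => rfl
  | cons c u ih => simp [ih]

theorem dollarMorphism_reverse (w : List A) :
    (dollarMorphism w).reverse = dollarMorphism w.reverse := by
  induction w with
  | nil => rfl
  | cons c w ih => simp [ih]

theorem dollarMorphism_injective : Function.Injective (dollarMorphism (A := A))
  | [], [], _ => rfl
  | a :: u, b :: v, h => by
    simp only [dollarMorphism_cons, List.cons.injEq, Option.some.injEq, true_and] at h
    rw [h.1, dollarMorphism_injective h.2.2]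

end

/-- A word `w` is a palindrome if and only if its image under the morphism
`c ↦ $ c c $` is a palindrome. -/
theorem pal_iff_dollarMorphism_pal {A : Type*} (w : List A) :
    w.reverse = w ↔ (dollarMorphism w).reverse = dollarMorphism w := by
  rw [dollarMorphism_reverse, dollarMorphism_injective.eq_iff]
end
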